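/- Let n be a positive integer and Λ = (λ_1 ≥ ⋯ ≥ λ_r) a partition of 2n in which every odd part occurs with even multiplicity, with dual partition Λ̃ = (λ̃_1, …, λ̃_t). Then 4·Σ_{j=1}^n (2j − n(Λ, 2j)) = 4n² + 2n − Σ_j λ̃_j² − #{i : λ_i is odd}; equivalently Σ_{j=1}^n (2j − n(Λ, 2j)) = ½·(dim Sp_{2n} − d), where dim Sp_{2n} = 2n² + n and d = ½(Σ_j λ̃_j² + #{i : λ_i odd}) is the dimension of the centralizer in Sp_{2n}(ℂ) of a nilpotent element of Jordan type Λ. -/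

import Mathlib

/-- `nIdx Λ j` is the index `a` (1-based) such that
`λ₁ + ⋯ + λ_{a-1} < j ≤ λ₁ + ⋯ + λ_a`, i.e. the least `a` with
`j ≤ λ₁ + ⋯ + λ_a`. -/
noncomputable def nIdx (Λ : List ℕ) (j : ℕ) : ℕ := sInf {a : ℕ | j ≤ (Λ.take a).sum}

/-!
Everything is expressed through the partial sums `P_a = λ₁ + ⋯ + λ_a`, `0 ≤ a < r`.
Counting the pairs `(j, a)` with `P_a < 2j ≤ 2n` in two ways gives
`Σ_j n(Λ, 2j) = Σ_a (n - ⌊P_a / 2⌋)`. Adding the parts of a decreasing partition one at a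
time gives `Σ_j λ̃_j² = 2r·2n - 2n - 2·Σ_a P_a`. Finally, the odd parts of `Λ` come in adjacent
equal pairs, and `P_a` is odd exactly when `a` separates such a pair, so
`#{i : λ_i odd} = 2·#{a : P_a odd}`. Since `4⌊P_a / 2⌋ = 2P_a - 2(P_a mod 2)`, the three
identities combine linearly.
-/

open Finset

lemma sum_range_length_cons_sum_take {α M : Type*} [AddMonoid α] [AddCommMonoid M]
    (f : α → M) (x : α) (L : List α) :
    ∑ a ∈ range (x :: L).length, f ((x :: L).take a).sum
      = f 0 + ∑ a ∈ range L.length, f (x + (L.take a).sum) := by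
  rw [List.length_cons, sum_range_succ', add_comm]
  simp

lemma filter_range_sum_take_lt_eq_range_nIdx (L : List ℕ) {m : ℕ} (hm : m ≤ L.sum) :
    {a ∈ range L.length | (L.take a).sum < m} = range (nIdx L m) := by
  have hmem : L.length ∈ {a : ℕ | m ≤ (L.take a).sum} := by simpa using hm
  have hle : nIdx L m ≤ L.length := Nat.sInf_le hmem
  have hspec : m ≤ (L.take (nIdx L m)).sum := Nat.sInf_mem ⟨_, hmem⟩
  ext a
  simp only [mem_filter, mem_range]
  constructor
  · rintro ⟨-, ha⟩
    by_contra! h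
    exact (hspec.trans (L.monotone_sum_take h)).not_gt ha
  · intro ha
    exact ⟨ha.trans_le hle, not_le.mp (Nat.notMem_of_lt_sInf (s := {a | m ≤ (L.take a).sum}) ha)⟩

lemma sum_nIdx_two_mul_add_sum_div_two (L : List ℕ) {n : ℕ} (hsum : L.sum = 2 * n) :
    ∑ j ∈ Icc 1 n, nIdx L (2 * j) + ∑ a ∈ range L.length, (L.take a).sum / 2
      = L.length * n := by
  have hcount : ∀ j ∈ Icc 1 n,
      nIdx L (2 * j) = ∑ a ∈ range L.length, if (L.take a).sum < 2 * j then 1 else 0 := by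
    intro j hj
    rw [← card_filter, filter_range_sum_take_lt_eq_range_nIdx L (by grind), card_range]
  rw [sum_congr rfl hcount, sum_comm, ← sum_add_distrib]
  refine (sum_const_nat fun a _ => ?_).trans (by rw [card_range])
  have hP : (L.take a).sum ≤ 2 * n := hsum ▸ (L.take_sublist a).sum_le_sum fun _ _ => Nat.zero_le _
  have hIoc : {j ∈ Icc 1 n | (L.take a).sum < 2 * j} = Ioc ((L.take a).sum / 2) n := by
    ext j; simp only [mem_filter, mem_Icc, mem_Ioc]; omega
  rw [← card_filter, hIoc, Nat.card_Ioc]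
  omega

lemma Finset.filter_Icc_one_le {M x : ℕ} (hx : x ≤ M) : {j ∈ Icc 1 M | j ≤ x} = Icc 1 x := by
  ext j; simp only [mem_filter, mem_Icc]; omega

lemma sum_Icc_countP_le_eq_sum (L : List ℕ) {M : ℕ} (hM : ∀ x ∈ L, x ≤ M) :
    ∑ j ∈ Icc 1 M, L.countP (fun x => decide (j ≤ x)) = L.sum := by
  induction L with
  | nil => simp
  | cons x L ih =>
    simp only [List.forall_mem_cons] at hM
    simp only [List.countP_cons, List.sum_cons, sum_add_distrib, ih hM.2, decide_eq_true_eq,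
      ← card_filter, filter_Icc_one_le hM.1, Nat.card_Icc]
    omega

lemma sum_Icc_sq_countP_le_cons {x : ℕ} {L : List ℕ} {M : ℕ} (hx : x ≤ M)
    (hL : ∀ y ∈ L, y ≤ x) :
    ∑ j ∈ Icc 1 M, (x :: L).countP (fun y => decide (j ≤ y)) ^ 2
      = ∑ j ∈ Icc 1 M, L.countP (fun y => decide (j ≤ y)) ^ 2 + (2 * L.sum + x) := by
  have hsq : ∀ j, (x :: L).countP (fun y => decide (j ≤ y)) ^ 2
      = L.countP (fun y => decide (j ≤ y)) ^ 2
        + if j ≤ x then 2 * L.countP (fun y => decide (j ≤ y)) + 1 else 0 := by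
    intro j
    rw [List.countP_cons]
    split_ifs <;> simp_all; ring
  rw [sum_congr rfl fun j _ => hsq j, sum_add_distrib, ← sum_filter, filter_Icc_one_le hx,
    sum_add_distrib, ← mul_sum, sum_Icc_countP_le_eq_sum L hL]
  simp

lemma sum_Icc_sq_countP_le_add_two_mul_sum_sum_take (L : List ℕ) (hL : L.Pairwise (· ≥ ·))
    {M : ℕ} (hM : ∀ x ∈ L, x ≤ M) :
    ∑ j ∈ Icc 1 M, L.countP (fun x => decide (j ≤ x)) ^ 2
      + 2 * ∑ a ∈ range L.length, (L.take a).sum + L.sum = 2 * L.length * L.sum := by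
  induction L with
  | nil => simp
  | cons x L ih =>
    rw [List.pairwise_cons] at hL
    simp only [List.forall_mem_cons] at hM
    rw [sum_Icc_sq_countP_le_cons hM.1 hL.1, sum_range_length_cons_sum_take (fun s => s),
      sum_add_distrib]
    simp only [sum_const, card_range, smul_eq_mul, List.sum_cons, List.length_cons]
    linear_combination ih hL.2 hM.2

lemma List.exists_eq_cons_of_even_count_cons {α : Type*} [LinearOrder α] {x : α} {L : List α}
    (hL : (x :: L).Pairwise (· ≥ ·)) (hx : Even ((x :: L).count x)) : ∃ L', L = x :: L' := by
  obtain _ | ⟨y, L'⟩ := L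
  · simp at hx
  · have hxy : y ≤ x := List.rel_of_pairwise_cons hL List.mem_cons_self
    have hmem : x ∈ y :: L' := by
      rw [List.count_cons_self] at hx
      rw [← List.count_pos_iff]
      grind
    have hyx : x ≤ y := by
      rcases List.mem_cons.mp hmem with h | h
      · exact h.le
      · exact List.rel_of_pairwise_cons hL.of_cons h
    exact ⟨L', by rw [le_antisymm hxy hyx]⟩

theorem countP_odd_eq_two_mul_sum_sum_take_mod_two (L : List ℕ) (hL : L.Pairwise (· ≥ ·))
    (hodd : ∀ x ∈ L, Odd x → Even (L.count x)) :
    L.countP (fun x => decide (Odd x)) = 2 * ∑ a ∈ range L.length, (L.take a).sum % 2 := by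
  match L, hL, hodd with
  | [], _, _ => simp
  | x :: L, hL, hodd =>
    by_cases hx : Odd x
    · obtain ⟨L', rfl⟩ := List.exists_eq_cons_of_even_count_cons hL (hodd x List.mem_cons_self hx)
      have ih := countP_odd_eq_two_mul_sum_sum_take_mod_two L' hL.of_cons.of_cons
        fun z hz hz' => by grind [hodd z (by simp [hz]) hz']
      rw [sum_range_length_cons_sum_take (· % 2),
        sum_range_length_cons_sum_take (fun s => (x + s) % 2)]
      have hpair : ∀ s, (x + (x + s)) % 2 = s % 2 := fun s => by omega
      simp [ih, hpair, hx, Nat.odd_iff.mp hx]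
      ring
    · have ih := countP_odd_eq_two_mul_sum_sum_take_mod_two L hL.of_cons
        fun z hz hz' => by grind [hodd z (by simp [hz]) hz']
      rw [sum_range_length_cons_sum_take (· % 2)]
      have heven : ∀ s, (x + s) % 2 = s % 2 := fun s => by grind
      simp [ih, heven, hx]
termination_by L.length

theorem four_mul_sum_nIdx_two_mul (Λ : List ℕ) (hsorted : Λ.Pairwise (· ≥ ·)) {n : ℕ}
    (hsum : Λ.sum = 2 * n) (hoddmult : ∀ x ∈ Λ, Odd x → Even (Λ.count x)) :
    4 * ∑ j ∈ Icc 1 n, nIdx Λ (2 * j)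
      = 2 * n + ∑ j ∈ Icc 1 (2 * n), Λ.countP (fun x => decide (j ≤ x)) ^ 2
        + Λ.countP (fun x => decide (Odd x)) := by
  have hnIdx := sum_nIdx_two_mul_add_sum_div_two Λ hsum
  have hdual := sum_Icc_sq_countP_le_add_two_mul_sum_sum_take Λ hsorted
    fun x hx => hsum ▸ List.le_sum_of_mem hx
  have hodd := countP_odd_eq_two_mul_sum_sum_take_mod_two Λ hsorted hoddmult
  have hdivmod : ∑ a ∈ range Λ.length, (2 * ((Λ.take a).sum / 2) + (Λ.take a).sum % 2)
      = ∑ a ∈ range Λ.length, (Λ.take a).sum :=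
    sum_congr rfl fun a _ => Nat.div_add_mod _ 2
  rw [hsum] at hdual
  rw [sum_add_distrib, ← mul_sum] at hdivmod
  linear_combination 4 * hnIdx + hdual.symm + hodd.symm + 2 * hdivmod.symm

lemma sum_Icc_two_mul_intCast (n : ℕ) : ∑ j ∈ Icc 1 n, 2 * (j : ℤ) = n ^ 2 + n := by
  induction n with
  | zero => simp
  | succ n ih =>
    rw [sum_Icc_succ_top (by omega), ih]
    push_cast
    ring

theorem global_nilpotent_stmt12_general (n : ℕ) (Λ : List ℕ)
    (hsorted : Λ.Pairwise (· ≥ ·)) (hsum : Λ.sum = 2 * n)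
    (hoddmult : ∀ x ∈ Λ, Odd x → Even (Λ.count x)) :
    4 * ∑ j ∈ Finset.Icc 1 n, (2 * (j : ℤ) - (nIdx Λ (2 * j) : ℤ)) =
      4 * (n : ℤ) ^ 2 + 2 * n
        - (∑ j ∈ Finset.Icc 1 (2 * n), ((Λ.countP (fun x => decide (j ≤ x)) : ℤ)) ^ 2)
        - Λ.countP (fun x => decide (Odd x)) := by
  have key := congrArg (Nat.cast : ℕ → ℤ) (four_mul_sum_nIdx_two_mul Λ hsorted hsum hoddmult)
  simp only [Nat.cast_add, Nat.cast_mul, Nat.cast_sum, Nat.cast_pow, Nat.cast_ofNat] at key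
  rw [sum_sub_distrib, sum_Icc_two_mul_intCast]
  linear_combination -key

/-- For a partition `Λ = (λ₁ ≥ ⋯ ≥ λ_r)` of `2n` in which every odd
part occurs with even multiplicity, with dual partition `Λ̃` (where `Λ̃_j = #{i : λ_i ≥ j}`,
which vanishes for `j > λ₁`, so the dual sum may be taken over `1 ≤ j ≤ 2n`):
`4·Σ_{j=1}^n (2j − n(Λ,2j)) = 4n² + 2n − Σ_j Λ̃_j² − #{i : λ_i odd}`. -/
theorem global_nilpotent_stmt12 (n : ℕ) (hn : 0 < n) (Λ : List ℕ)
    (hpos : ∀ x ∈ Λ, 0 < x) (hsorted : Λ.Pairwise (· ≥ ·)) (hsum : Λ.sum = 2 * n)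
    (hoddmult : ∀ x ∈ Λ, Odd x → Even (Λ.count x)) :
    4 * ∑ j ∈ Finset.Icc 1 n, (2 * (j : ℤ) - (nIdx Λ (2 * j) : ℤ)) =
      4 * (n : ℤ) ^ 2 + 2 * n
        - (∑ j ∈ Finset.Icc 1 (2 * n), ((Λ.countP (fun x => decide (j ≤ x)) : ℤ)) ^ 2)
        - Λ.countP (fun x => decide (Odd x)) :=
  global_nilpotent_stmt12_general n Λ hsorted hsum hoddmult
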